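/- arXiv:2507.02684 — 2 statements merged into one kernel-verified Lean document; each statement's English description precedes it below -/
import Mathlib

section
/- Let A and B be n×n complex matrices. Then ‖A+B‖_F ≤ √((1+√2)/2) · ‖|A|+|B|‖_F, where ‖·‖_F denotes the Frobenius norm. -/
open scoped Matrix ComplexOrder

/-- The absolute value `|A| := (A*A)^{1/2}` of a square complex matrix, i.e. the (unique)
positive semidefinite square root of `Aᴴ * A`. -/
noncomputable def matrixAbs {n : ℕ} (A : Matrix (Fin n) (Fin n) ℂ) :
    Matrix (Fin n) (Fin n) ℂ :=
  open scoped MatrixOrder in CFC.sqrt (Aᴴ * A)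

/-- The Frobenius norm `‖A‖_F = (tr |A|²)^{1/2}` of a square complex matrix. -/
noncomputable def frobeniusNorm' {n : ℕ} (A : Matrix (Fin n) (Fin n) ℂ) : ℝ :=
  Real.sqrt ((matrixAbs A ^ 2).trace.re)

/-!
Write `A = U P` and `B = V Q` with `P = |A|`, `Q = |B|` and `U`, `V` unitary, and put
`W = Vᴴ U`. Expanding the squares, the claim becomes a bound on
`r = Re tr(Bᴴ A) = Re tr(Q W P)`. Factoring `P = RᴴR` and `Q = SᴴS`, Cauchy–Schwarz for the
Frobenius inner product gives `r² ≤ tr(QP) · t` with `t = Re tr(Wᴴ Q W P)`, and a second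
application gives `t² ≤ tr P² · tr Q²`. The constant comes from the AM–GM step
`2√(pt) ≤ (√2 - 1) t + (√2 + 1) p`, whose coefficients multiply to `1`.
-/

theorem add_add_two_mul_le_of_sq_le_mul {a b p t r : ℝ} (ha : 0 ≤ a) (hb : 0 ≤ b) (hp : 0 ≤ p)
    (ht : 0 ≤ t) (hr : r ^ 2 ≤ p * t) (htab : t ^ 2 ≤ a * b) :
    a + b + 2 * r ≤ (1 + √2) / 2 * (a + b + 2 * p) := by
  have hs : √2 ^ 2 = 2 := Real.sq_sqrt zero_le_two
  have hs1 : 1 ≤ √2 := Real.one_lt_sqrt_two.le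
  have hr' : 2 * r ≤ (√2 - 1) * t + (√2 + 1) * p := by
    refine abs_le_of_sq_le_sq' ?_ (by positivity) |>.2
    nlinarith [sq_nonneg ((√2 - 1) * t - (√2 + 1) * p)]
  have ht' : t ≤ (a + b) / 2 := by nlinarith [sq_nonneg (a - b)]
  nlinarith [mul_le_mul_of_nonneg_left ht' (sub_nonneg.mpr hs1)]

theorem LinearMap.exists_linearIsometryEquiv_apply_eq_of_norm_eq {𝕜 E : Type*} [RCLike 𝕜]
    [NormedAddCommGroup E] [InnerProductSpace 𝕜 E] [FiniteDimensional 𝕜 E] {f g : E →ₗ[𝕜] E}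
    (h : ∀ x, ‖f x‖ = ‖g x‖) : ∃ u : E ≃ₗᵢ[𝕜] E, ∀ x, u (g x) = f x := by
  have hker : ker g ≤ ker f := fun x hx => by
    rw [mem_ker, ← norm_eq_zero, h, norm_eq_zero, ← mem_ker]
    exact hx
  let L : range g →ₗ[𝕜] E := (ker g).liftQ f hker ∘ₗ g.quotKerEquivRange.symm.toLinearMap
  have hL : ∀ x, L ⟨g x, mem_range_self g x⟩ = f x := fun x => by simp [L]
  let Li : range g →ₗᵢ[𝕜] E := ⟨L, by rintro ⟨_, x, rfl⟩; simp [hL, h]⟩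
  exact ⟨Li.extend.toLinearIsometryEquiv rfl, fun x => (Li.extend_apply ⟨g x, _⟩).trans (hL x)⟩

namespace Matrix

variable {𝕜 m n : Type*} [RCLike 𝕜] [Fintype m] [Fintype n]

theorem sq_re_trace_conjTranspose_mul_le (X Y : Matrix m n 𝕜) :
    RCLike.re (Xᴴ * Y).trace ^ 2 ≤ RCLike.re (Xᴴ * X).trace * RCLike.re (Yᴴ * Y).trace := by
  have hinner : ∀ X Y : Matrix m n 𝕜,
      inner 𝕜 (WithLp.toLp 2 X.vec) (WithLp.toLp 2 Y.vec) = (Xᴴ * Y).trace := fun X Y => by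
    rw [EuclideanSpace.inner_eq_star_dotProduct, dotProduct_comm, star_vec_dotProduct_vec]
  simp only [← hinner, inner_self_eq_norm_sq, ← mul_pow]
  exact sq_le_sq' (abs_le.mp ((RCLike.abs_re_le_norm _).trans (norm_inner_le_norm _ _))).1
    (re_inner_le_norm _ _)

theorem re_trace_conjTranspose_add_mul_add (X Y : Matrix m n 𝕜) :
    RCLike.re ((X + Y)ᴴ * (X + Y)).trace =
      RCLike.re (Xᴴ * X).trace + RCLike.re (Yᴴ * Y).trace + 2 * RCLike.re (Yᴴ * X).trace := by
  have hswap : RCLike.re (Xᴴ * Y).trace = RCLike.re (Yᴴ * X).trace := by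
    rw [← conjTranspose_conjTranspose X, ← conjTranspose_mul, trace_conjTranspose,
      conjTranspose_conjTranspose, RCLike.star_def, RCLike.conj_re]
  simp only [conjTranspose_add, Matrix.add_mul, Matrix.mul_add, trace_add, map_add, hswap]
  ring

variable [DecidableEq n]

theorem exists_mem_unitary_mul_eq_of_conjTranspose_mul_self_eq {A P : Matrix n n 𝕜}
    (h : Aᴴ * A = Pᴴ * P) : ∃ U ∈ unitary (Matrix n n 𝕜), A = U * P := by
  set a := toEuclideanCLM (n := n) (𝕜 := 𝕜) A
  set p := toEuclideanCLM (n := n) (𝕜 := 𝕜) P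
  have hstar : star a * a = star p * p := by
    have := congr_arg (toEuclideanCLM (n := n) (𝕜 := 𝕜)) h
    rwa [← star_eq_conjTranspose, ← star_eq_conjTranspose, map_mul, map_mul, map_star,
      map_star] at this
  have hnorm : ∀ x, ‖a x‖ = ‖p x‖ := fun x => by
    rw [← sq_eq_sq₀ (norm_nonneg _) (norm_nonneg _),
      ContinuousLinearMap.apply_norm_sq_eq_inner_adjoint_left,
      ContinuousLinearMap.apply_norm_sq_eq_inner_adjoint_left,
      ← ContinuousLinearMap.star_eq_adjoint, ← ContinuousLinearMap.star_eq_adjoint,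
      ← ContinuousLinearMap.mul_def, ← ContinuousLinearMap.mul_def, hstar]
  obtain ⟨u, hu⟩ := LinearMap.exists_linearIsometryEquiv_apply_eq_of_norm_eq
    (f := a.toLinearMap) (g := p.toLinearMap) hnorm
  have hau : a = (Unitary.linearIsometryEquiv.symm u : _ →L[𝕜] _) * p :=
    ContinuousLinearMap.ext fun x => (hu x).symm
  refine ⟨(toEuclideanCLM (n := n) (𝕜 := 𝕜)).symm (Unitary.linearIsometryEquiv.symm u),
    Unitary.map_mem _ (Unitary.linearIsometryEquiv.symm u).2, ?_⟩
  calc A = (toEuclideanCLM (n := n) (𝕜 := 𝕜)).symm a := (StarAlgEquiv.symm_apply_apply _ A).symm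
    _ = _ := by rw [hau, map_mul, StarAlgEquiv.symm_apply_apply]

open scoped MatrixOrder in
theorem PosSemidef.exists_eq_conjTranspose_mul_self {P : Matrix n n 𝕜} (hP : P.PosSemidef) :
    ∃ R : Matrix n n 𝕜, P = Rᴴ * R :=
  CStarAlgebra.nonneg_iff_eq_star_mul_self.mp hP.nonneg

theorem PosSemidef.re_trace_mul_nonneg {P Q : Matrix n n 𝕜} (hP : P.PosSemidef)
    (hQ : Q.PosSemidef) : 0 ≤ RCLike.re (P * Q).trace := by
  obtain ⟨R, rfl⟩ := hP.exists_eq_conjTranspose_mul_self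
  rw [Matrix.mul_assoc, trace_mul_comm]
  exact (RCLike.nonneg_iff.mp (hQ.mul_mul_conjTranspose_same R).trace_nonneg).1

theorem trace_conjTranspose_mul_mul_of_mem_unitary {W : Matrix n n 𝕜}
    (hW : W ∈ unitary (Matrix n n 𝕜)) (Z : Matrix n n 𝕜) : (Wᴴ * Z * W).trace = Z.trace := by
  rw [trace_mul_cycle, ← star_eq_conjTranspose, Unitary.mul_star_self_of_mem hW, Matrix.one_mul]

theorem sq_re_trace_mul_mul_le {P Q : Matrix n n 𝕜} (hP : P.PosSemidef) (hQ : Q.PosSemidef)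
    (W : Matrix n n 𝕜) :
    RCLike.re (Q * W * P).trace ^ 2 ≤
      RCLike.re (Q * P).trace * RCLike.re (Wᴴ * Q * W * P).trace := by
  obtain ⟨R, rfl⟩ := hP.exists_eq_conjTranspose_mul_self
  obtain ⟨S, rfl⟩ := hQ.exists_eq_conjTranspose_mul_self
  have key := sq_re_trace_conjTranspose_mul_le (S * Rᴴ) (S * W * Rᴴ)
  simp only [conjTranspose_mul, conjTranspose_conjTranspose, Matrix.mul_assoc] at key ⊢
  rw [trace_mul_comm R, trace_mul_comm R, trace_mul_comm R] at key
  simpa only [Matrix.mul_assoc] using key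

theorem sq_re_trace_conjTranspose_mul_mul_mul_le {P Q W : Matrix n n 𝕜} (hP : P.IsHermitian)
    (hQ : Q.IsHermitian) (hW : W ∈ unitary (Matrix n n 𝕜)) :
    RCLike.re (Wᴴ * Q * W * P).trace ^ 2 ≤
      RCLike.re (P * P).trace * RCLike.re (Q * Q).trace := by
  have hQW : (Wᴴ * Q * W)ᴴ = Wᴴ * Q * W := by
    simp only [conjTranspose_mul, conjTranspose_conjTranspose, hQ.eq, Matrix.mul_assoc]
  have hsq : (Wᴴ * Q * W) * (Wᴴ * Q * W) = Wᴴ * (Q * Q) * W := by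
    rw [← star_eq_conjTranspose]
    simp only [Matrix.mul_assoc]
    rw [← Matrix.mul_assoc W, Unitary.mul_star_self_of_mem hW, Matrix.one_mul]
  have key := sq_re_trace_conjTranspose_mul_le (Wᴴ * Q * W) P
  rwa [hQW, hsq, trace_conjTranspose_mul_mul_of_mem_unitary hW, hP.eq, mul_comm] at key

theorem re_trace_conjTranspose_add_mul_add_le {A B P Q : Matrix n n 𝕜} (hP : P.PosSemidef)
    (hQ : Q.PosSemidef) (hA : Aᴴ * A = P * P) (hB : Bᴴ * B = Q * Q) :
    RCLike.re ((A + B)ᴴ * (A + B)).trace ≤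
      (1 + √2) / 2 * RCLike.re ((P + Q)ᴴ * (P + Q)).trace := by
  obtain ⟨U, hU, rfl⟩ :=
    exists_mem_unitary_mul_eq_of_conjTranspose_mul_self_eq (A := A) (P := P) (by rw [hA, hP.1.eq])
  obtain ⟨V, hV, rfl⟩ :=
    exists_mem_unitary_mul_eq_of_conjTranspose_mul_self_eq (A := B) (P := Q) (by rw [hB, hQ.1.eq])
  have hW : Vᴴ * U ∈ unitary (Matrix n n 𝕜) := by
    rw [← star_eq_conjTranspose]
    exact mul_mem (Unitary.star_mem hV) hU
  have hBA : (V * Q)ᴴ * (U * P) = Q * (Vᴴ * U) * P := by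
    rw [conjTranspose_mul, hQ.1.eq]
    simp only [Matrix.mul_assoc]
  rw [re_trace_conjTranspose_add_mul_add, re_trace_conjTranspose_add_mul_add, hA, hB, hBA,
    hP.1.eq, hQ.1.eq]
  exact add_add_two_mul_le_of_sq_le_mul (hP.re_trace_mul_nonneg hP) (hQ.re_trace_mul_nonneg hQ)
    (hQ.re_trace_mul_nonneg hP) ((hQ.conjTranspose_mul_mul_same _).re_trace_mul_nonneg hP)
    (sq_re_trace_mul_mul_le hP hQ _) (sq_re_trace_conjTranspose_mul_mul_mul_le hP.1 hQ.1 hW)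

end Matrix

open scoped MatrixOrder in
theorem matrixAbs_posSemidef {n : ℕ} (A : Matrix (Fin n) (Fin n) ℂ) : (matrixAbs A).PosSemidef :=
  Matrix.nonneg_iff_posSemidef.mp (CFC.sqrt_nonneg _)

open scoped MatrixOrder in
theorem matrixAbs_mul_self {n : ℕ} (A : Matrix (Fin n) (Fin n) ℂ) :
    matrixAbs A * matrixAbs A = Aᴴ * A :=
  CFC.sqrt_mul_sqrt_self _ (Matrix.posSemidef_conjTranspose_mul_self A).nonneg

theorem frobeniusNorm'_eq_sqrt {n : ℕ} (A : Matrix (Fin n) (Fin n) ℂ) :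
    frobeniusNorm' A = √(Aᴴ * A).trace.re := by
  rw [frobeniusNorm', sq, matrixAbs_mul_self]

/-- **Lee's conjecture (Lin–Zhang theorem):** for all `n × n` complex matrices `A, B`,
`‖A + B‖_F ≤ √((1 + √2)/2) · ‖|A| + |B|‖_F`. -/
theorem frobenius_norm_add_le {n : ℕ} (A B : Matrix (Fin n) (Fin n) ℂ) :
    frobeniusNorm' (A + B) ≤
      Real.sqrt ((1 + Real.sqrt 2) / 2) * frobeniusNorm' (matrixAbs A + matrixAbs B) := by
  rw [frobeniusNorm'_eq_sqrt, frobeniusNorm'_eq_sqrt, ← Real.sqrt_mul (by positivity)]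
  exact Real.sqrt_le_sqrt <| Matrix.re_trace_conjTranspose_add_mul_add_le (matrixAbs_posSemidef A)
    (matrixAbs_posSemidef B) (matrixAbs_mul_self A).symm (matrixAbs_mul_self B).symm
end

section
/- Let X and Y be n×n positive semidefinite complex matrices, and let Q be an n×n complex matrix that is a contraction, i.e., its operator norm satisfies ‖Q‖ ≤ 1 (equivalently, s₁(Q) ≤ 1). Then for every real t > 0, 4·|tr(QXY)| ≤ t·tr(X² + Y²) + (1/t)·tr(XY + YX). -/
/-!
Write `X = AᴴA` and `Y = BᴴB`. Then `tr(QXY)` is the Frobenius inner product of `A Qᴴ Bᴴ` and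
`A Bᴴ`, so Cauchy–Schwarz gives `|tr(QXY)|² ≤ tr(QXQᴴY) · tr(XY)`. For the Hermitian matrices
`R = QXQᴴ` and `Y`, `tr((R - Y)²) ≥ 0` gives `2 tr(RY) ≤ tr(R²) + tr(Y²)`, and `tr(R²) ≤ tr(X²)`
because `QᴴQ ≤ 1` survives conjugation. The weighted AM–GM inequality `2√(ab) ≤ ta + b/t`
finishes the proof.
-/

open scoped Matrix ComplexOrder Matrix.Norms.L2Operator MatrixOrder

namespace Matrix

variable {n 𝕜 : Type*} [Fintype n] [RCLike 𝕜]

lemma PosSemidef.trace_mul_nonneg [DecidableEq n] {X Y : Matrix n n 𝕜} (hX : X.PosSemidef)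
    (hY : Y.PosSemidef) : 0 ≤ (X * Y).trace := by
  obtain ⟨A, rfl⟩ := CStarAlgebra.nonneg_iff_eq_star_mul_self.mp hX.nonneg
  rw [star_eq_conjTranspose, Matrix.mul_assoc, trace_mul_comm]
  exact (hY.mul_mul_conjTranspose_same A).trace_nonneg

lemma PosSemidef.re_trace_mul_nonneg_s2 [DecidableEq n] {X Y : Matrix n n 𝕜} (hX : X.PosSemidef)
    (hY : Y.PosSemidef) : 0 ≤ RCLike.re (X * Y).trace :=
  (RCLike.nonneg_iff.mp (hX.trace_mul_nonneg hY)).1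

lemma norm_trace_conjTranspose_mul_sq_le (M N : Matrix n n 𝕜) :
    ‖(Mᴴ * N).trace‖ ^ 2 ≤ RCLike.re (Mᴴ * M).trace * RCLike.re (Nᴴ * N).trace := by
  classical
  let := toMatrixSeminormedAddCommGroup (1 : Matrix n n 𝕜) .one
  let := toMatrixInnerProductSpace (1 : Matrix n n 𝕜) .one
  have inner_eq (A B : Matrix n n 𝕜) : inner 𝕜 A B = (Aᴴ * B).trace := by
    change (B * 1 * Aᴴ).trace = _
    rw [Matrix.mul_one, trace_mul_comm]
  have h := inner_mul_inner_self_le (𝕜 := 𝕜) M N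
  rwa [norm_inner_symm N M, ← sq, inner_eq, inner_eq, inner_eq] at h

lemma PosSemidef.norm_trace_mul_mul_sq_le [DecidableEq n] {X Y : Matrix n n 𝕜}
    (hX : X.PosSemidef) (hY : Y.PosSemidef) (Q : Matrix n n 𝕜) :
    ‖(Q * X * Y).trace‖ ^ 2 ≤ RCLike.re (Q * X * Qᴴ * Y).trace * RCLike.re (X * Y).trace := by
  obtain ⟨A, rfl⟩ := CStarAlgebra.nonneg_iff_eq_star_mul_self.mp hX.nonneg
  obtain ⟨B, rfl⟩ := CStarAlgebra.nonneg_iff_eq_star_mul_self.mp hY.nonneg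
  have h := norm_trace_conjTranspose_mul_sq_le (A * Qᴴ * Bᴴ) (A * Bᴴ)
  simp only [conjTranspose_mul, conjTranspose_conjTranspose, Matrix.mul_assoc] at h
  rw [trace_mul_comm B, trace_mul_comm B, trace_mul_comm B] at h
  simpa only [star_eq_conjTranspose, Matrix.mul_assoc] using h

lemma IsHermitian.two_mul_re_trace_mul_le [DecidableEq n] {R Y : Matrix n n 𝕜}
    (hR : R.IsHermitian) (hY : Y.IsHermitian) :
    2 * RCLike.re (R * Y).trace ≤ RCLike.re (R ^ 2).trace + RCLike.re (Y ^ 2).trace := by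
  have h := (posSemidef_conjTranspose_mul_self (R - Y)).trace_nonneg
  rw [conjTranspose_sub, hR.eq, hY.eq, sub_mul, mul_sub, mul_sub, trace_sub, trace_sub,
    trace_sub, trace_mul_comm Y R] at h
  have := (RCLike.nonneg_iff.mp h).1
  simp only [map_sub] at this
  rw [sq, sq]
  linarith

lemma re_trace_le_re_trace_of_le {A B : Matrix n n 𝕜} (h : A ≤ B) :
    RCLike.re A.trace ≤ RCLike.re B.trace := by
  have := (RCLike.nonneg_iff.mp (le_iff.mp h).trace_nonneg).1
  rw [trace_sub, map_sub] at this
  linarith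

lemma conjTranspose_mul_self_le_one [DecidableEq n] {Q : Matrix n n ℂ} (hQ : ‖Q‖ ≤ 1) :
    Qᴴ * Q ≤ 1 := by
  rw [← CStarAlgebra.norm_le_one_iff_of_nonneg _ (posSemidef_conjTranspose_mul_self Q).nonneg,
    l2_opNorm_conjTranspose_mul_self]
  exact mul_le_one₀ hQ (norm_nonneg Q) hQ

lemma IsHermitian.re_trace_sq_conjugate_le [DecidableEq n] {X Q : Matrix n n ℂ}
    (hX : X.IsHermitian) (hQ : ‖Q‖ ≤ 1) :
    ((Q * X * Qᴴ) ^ 2).trace.re ≤ (X ^ 2).trace.re := by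
  have hQQ := conjTranspose_mul_self_le_one hQ
  have h₁ := star_right_conjugate_le_conjugate hQQ (Q * X)
  have h₂ := star_left_conjugate_le_conjugate hQQ X
  simp only [star_eq_conjTranspose, conjTranspose_mul, hX.eq, Matrix.mul_one] at h₁ h₂
  calc ((Q * X * Qᴴ) ^ 2).trace.re = (Q * X * (Qᴴ * Q) * (X * Qᴴ)).trace.re := by
        simp only [sq, Matrix.mul_assoc]
    _ ≤ (Q * X * (X * Qᴴ)).trace.re := re_trace_le_re_trace_of_le h₁
    _ = (X * (Qᴴ * Q) * X).trace.re := by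
        rw [trace_mul_comm]; simp only [Matrix.mul_assoc]
    _ ≤ (X ^ 2).trace.re := sq X ▸ re_trace_le_re_trace_of_le h₂

end Matrix

lemma two_mul_le_mul_add_div_of_sq_le_mul {z a b t : ℝ} (ha : 0 ≤ a) (hb : 0 ≤ b) (ht : 0 < t)
    (h : z ^ 2 ≤ a * b) : 2 * z ≤ t * a + b / t := by
  have hab : (t * a) * (b / t) = a * b := by field_simp
  have hsq : (2 * z) ^ 2 ≤ (t * a + b / t) ^ 2 := by nlinarith [sq_nonneg (t * a - b / t)]
  exact (abs_le_of_sq_le_sq hsq (by positivity)).trans' (le_abs_self _)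

open Matrix in
/-- **Lemma 2:** If `X, Y` are `n × n` positive semidefinite complex matrices and `Q` is a
contraction (operator norm `‖Q‖ ≤ 1`, equivalently `s₁(Q) ≤ 1`), then for every real `t > 0`,
`4·|tr(QXY)| ≤ t·tr(X² + Y²) + (1/t)·tr(XY + YX)`. -/
theorem four_mul_abs_trace_contraction_mul_le {n : ℕ}
    (X Y Q : Matrix (Fin n) (Fin n) ℂ)
    (hX : X.PosSemidef) (hY : Y.PosSemidef) (hQ : ‖Q‖ ≤ 1)
    (t : ℝ) (ht : 0 < t) :
    4 * ‖(Q * X * Y).trace‖ ≤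
      t * (X ^ 2 + Y ^ 2).trace.re + (1 / t) * (X * Y + Y * X).trace.re := by
  have hR : (Q * X * Qᴴ).PosSemidef := hX.mul_mul_conjTranspose_same Q
  have hAMGM := two_mul_le_mul_add_div_of_sq_le_mul (hR.re_trace_mul_nonneg_s2 hY)
    (hX.re_trace_mul_nonneg_s2 hY) ht (hX.norm_trace_mul_mul_sq_le hY Q)
  have hRY := (hR.isHermitian.two_mul_re_trace_mul_le hY.isHermitian).trans
    (add_le_add_left (hX.isHermitian.re_trace_sq_conjugate_le hQ) _)
  simp only [RCLike.re_to_complex] at hAMGM hRY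
  rw [trace_add, trace_add, trace_mul_comm Y X, Complex.add_re, Complex.add_re]
  linarith [mul_le_mul_of_nonneg_left hRY ht.le, one_div_mul_eq_div t (X * Y).trace.re]
end
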